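/- Let n ≥ 3, let 0 ≤ k ≤ n, and let m 3-clauses on n variables be drawn independently and uniformly at random. Let X_k denote the number of axis-aligned k-subcubes of {0,1}^n all of whose vertices satisfy all m clauses. Then the expectation of X_k equals C(n,k) · 2^{n−k} · (1 − q_{k,n})^m. -/
import Mathlib


attribute [local instance] Classical.propDecidable

/-- An axis-aligned subcube of `{0,1}^n`: `none` marks a free coordinate,
`some b` a coordinate fixed to bit `b`. -/
def freeCount {n : ℕ} (f : Fin n → Option Bool) : ℕ :=
  (Finset.univ.filter fun i => f i = none).card

/-- `x` is a vertex of the subcube `f`: `x` agrees with the fixed bits of `f`. -/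
def isVertex {n : ℕ} (f : Fin n → Option Bool) (x : Fin n → Bool) : Prop :=
  ∀ i, f i = none ∨ f i = some (x i)

/-- A 3-clause on `n` variables: a 3-element set of variable indices together with
the (unique) falsifying bit pattern on those variables (all three literals false). -/
abbrev Clause3 (n : ℕ) :=
  (s : {s : Finset (Fin n) // s.card = 3}) × ({ i : Fin n // i ∈ s.val } → Bool)

/-- `x` falsifies the clause `c` iff it agrees with the falsifying pattern of `c`
on all three variables of `c`. -/
def falsifies {n : ℕ} (x : Fin n → Bool) (c : Clause3 n) : Prop :=
  ∀ i : { i : Fin n // i ∈ c.1.val }, x i.val = c.2 i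

/-- `q_{k,n} = (Σ_{t=0}^{3} C(n−k,t)·C(k,3−t)·2^{−t}) / C(n,3)`. -/
noncomputable def qkn (n k : ℕ) : ℝ :=
  (∑ t ∈ Finset.range 4,
      (Nat.choose (n - k) t : ℝ) * (Nat.choose k (3 - t) : ℝ) * (2 : ℝ)⁻¹ ^ t) /
    (Nat.choose n 3 : ℝ)

lemma bad_iff {n : ℕ} (g : Fin n → Option Bool) (c : Clause3 n) :
    (∃ x, isVertex g x ∧ falsifies x c) ↔
      ∀ i : { i : Fin n // i ∈ c.1.val }, g i.val = none ∨ g i.val = some (c.2 i) := by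
  classical
  constructor
  · rintro ⟨x, hv, hf⟩ i
    rcases hv i.val with h | h
    · exact Or.inl h
    · right; rw [h, hf i]
  · intro h
    refine ⟨fun i => if hi : i ∈ c.1.val then c.2 ⟨i, hi⟩ else (g i).getD false, ?_, ?_⟩
    · intro i
      by_cases hi : i ∈ c.1.val
      · simpa [hi] using h ⟨i, hi⟩
      · cases hgi : g i with
        | none => exact Or.inl rfl
        | some b => right; simp [hi, hgi]
    · intro i
      simp [falsifies, i.2]

open Finset in
lemma fiber_count {n k : ℕ} (F : Finset (Fin n)) (hF : F.card = k) (j : ℕ) (hj : j ≤ 3) :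
    ((Finset.powersetCard 3 (Finset.univ : Finset (Fin n))).filter
      (fun S => (S ∩ F).card = j)).card = k.choose j * (n - k).choose (3 - j) := by
  classical
  have := Finset.card_bij'
    (i := fun (S : Finset (Fin n)) (_ : S ∈ (Finset.powersetCard 3 (Finset.univ : Finset (Fin n))).filter
      (fun S => (S ∩ F).card = j)) => ((S ∩ F, S \ F) : Finset (Fin n) × Finset (Fin n)))
    (j := fun (p : Finset (Fin n) × Finset (Fin n)) (_ : p ∈ (F.powersetCard j) ×ˢ (Fᶜ.powersetCard (3 - j))) =>
      p.1 ∪ p.2)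
    ?_ ?_ ?_ ?_
  · rw [this]
    rw [Finset.card_product, Finset.card_powersetCard, Finset.card_powersetCard, hF,
      Finset.card_compl, Fintype.card_fin, hF]
  · intro S hS
    simp only [mem_filter, Finset.mem_powersetCard, Finset.mem_product] at hS ⊢
    obtain ⟨⟨-, hc3⟩, hcj⟩ := hS
    have hsd : (S \ F).card = 3 - j := by
      have := Finset.card_inter_add_card_sdiff S F
      omega
    exact ⟨⟨Finset.inter_subset_right, hcj⟩, ⟨fun i hi => by
      simp only [Finset.mem_compl]; exact (Finset.mem_sdiff.mp hi).2, hsd⟩⟩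
  · intro p hp
    simp only [Finset.mem_product, Finset.mem_powersetCard, mem_filter] at hp ⊢
    obtain ⟨⟨h1F, h1c⟩, h2F, h2c⟩ := hp
    have hdisj : Disjoint p.1 p.2 := by
      apply Finset.disjoint_left.mpr
      intro a ha1 ha2
      exact (Finset.mem_compl.mp (h2F ha2)) (h1F ha1)
    have hinter : (p.1 ∪ p.2) ∩ F = p.1 := by
      ext a
      simp only [Finset.mem_inter, Finset.mem_union]
      constructor
      · rintro ⟨h | h, haF⟩
        · exact h
        · exact absurd haF (Finset.mem_compl.mp (h2F h))
      · intro h; exact ⟨Or.inl h, h1F h⟩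
    rw [Finset.card_union_of_disjoint hdisj, h1c, h2c, hinter, h1c]
    exact ⟨⟨Finset.subset_univ _, by omega⟩, rfl⟩
  · intro S hS
    show S ∩ F ∪ S \ F = S
    rw [Finset.union_comm, Finset.sdiff_union_inter]
  · intro p hp
    simp only [Finset.mem_product, Finset.mem_powersetCard] at hp
    obtain ⟨⟨h1F, -⟩, h2F, -⟩ := hp
    have hinter : (p.1 ∪ p.2) ∩ F = p.1 := by
      ext a
      simp only [Finset.mem_inter, Finset.mem_union]
      constructor
      · rintro ⟨h | h, haF⟩
        · exact h
        · exact absurd haF (Finset.mem_compl.mp (h2F h))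
      · intro h; exact ⟨Or.inl h, h1F h⟩
    have hsd : (p.1 ∪ p.2) \ F = p.2 := by
      ext a
      simp only [Finset.mem_sdiff, Finset.mem_union]
      constructor
      · rintro ⟨h | h, haF⟩
        · exact absurd (h1F h) haF
        · exact h
      · intro h; exact ⟨Or.inr h, Finset.mem_compl.mp (h2F h)⟩
    rw [Prod.ext_iff]
    exact ⟨hinter, hsd⟩

open Finset in
lemma inner_count {n : ℕ} (g : Fin n → Option Bool) (s : {s : Finset (Fin n) // s.card = 3}) :
    (∑ b : ({i // i ∈ s.val} → Bool),
        if (∀ i : {i // i ∈ s.val}, g i.val = none ∨ g i.val = some (b i)) then (1:ℕ) else 0)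
      = 2 ^ ((s.val.filter fun i => g i = none)).card := by
  classical
  rw [← Finset.card_filter]
  have heq : (Finset.univ.filter fun b : ({i // i ∈ s.val} → Bool) =>
      (∀ i : {i // i ∈ s.val}, g i.val = none ∨ g i.val = some (b i)))
      = Fintype.piFinset (fun i : {i // i ∈ s.val} =>
          if g i.val = none then (Finset.univ : Finset Bool) else {(g i.val).getD false}) := by
    ext b
    simp only [Fintype.mem_piFinset, mem_filter, mem_univ, true_and]
    apply forall_congr'
    intro i
    cases hgi : g i.val with
    | none => simp [hgi]
    | some v => simp [hgi, eq_comm]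
  rw [heq, Fintype.card_piFinset]
  have hcard : ∀ i : {i // i ∈ s.val},
      ((if g i.val = none then (Finset.univ : Finset Bool) else {(g i.val).getD false}).card)
        = if g i.val = none then 2 else 1 := by
    intro i; by_cases h : g i.val = none <;> simp [h]
  simp_rw [hcard]
  rw [Finset.prod_coe_sort s.val (fun i => if g i = none then 2 else 1)]
  rw [Finset.prod_ite (fun _ => (2:ℕ)) (fun _ => (1:ℕ))]
  simp [Finset.prod_const]

open Finset in
lemma bad_count {n k : ℕ} (g : Fin n → Option Bool) (hg : freeCount g = k) :
    (Finset.univ.filter fun c : Clause3 n => ∃ x, isVertex g x ∧ falsifies x c).card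
      = ∑ j ∈ Finset.range 4, (k.choose j * (n - k).choose (3 - j)) * 2 ^ j := by
  classical
  set F : Finset (Fin n) := Finset.univ.filter fun i => g i = none with hFdef
  have hF : F.card = k := hg
  have h1 : (Finset.univ.filter fun c : Clause3 n => ∃ x, isVertex g x ∧ falsifies x c).card
      = ∑ s : {s : Finset (Fin n) // s.card = 3}, 2 ^ ((s.val.filter fun i => g i = none)).card := by
    rw [Finset.card_filter, ← Finset.univ_sigma_univ, Finset.sum_sigma]
    apply Finset.sum_congr rfl
    intro s _
    rw [← inner_count g s]
    apply Finset.sum_congr rfl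
    intro b _
    congr 1
    rw [eq_iff_iff]
    exact bad_iff g ⟨s, b⟩
  rw [h1]
  have h2 : ∑ s : {s : Finset (Fin n) // s.card = 3}, 2 ^ ((s.val.filter fun i => g i = none)).card
      = ∑ S ∈ Finset.powersetCard 3 (Finset.univ : Finset (Fin n)), 2 ^ ((S ∩ F)).card := by
    have hps : Finset.powersetCard 3 (Finset.univ : Finset (Fin n))
        = Finset.univ.filter (fun S : Finset (Fin n) => S.card = 3) := by
      ext S; simp [Finset.mem_powersetCard]
    have hfil : ∀ S : Finset (Fin n), (S.filter fun i => g i = none) = S ∩ F := by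
      intro S; ext i; simp [hFdef]
    simp_rw [hfil]
    rw [hps]
    exact (Finset.sum_subtype _ (fun S => by simp) (fun S => 2 ^ ((S ∩ F)).card)).symm
  rw [h2]
  have hmaps : ∀ S ∈ Finset.powersetCard 3 (Finset.univ : Finset (Fin n)),
      (S ∩ F).card ∈ Finset.range 4 := by
    intro S hS
    rw [Finset.mem_powersetCard] at hS
    have : (S ∩ F).card ≤ S.card := Finset.card_le_card Finset.inter_subset_left
    rw [Finset.mem_range]; omega
  rw [← Finset.sum_fiberwise_of_maps_to hmaps (fun S => 2 ^ (S ∩ F).card)]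
  apply Finset.sum_congr rfl
  intro j hj
  rw [Finset.mem_range] at hj
  have : ∑ S ∈ (Finset.powersetCard 3 (Finset.univ : Finset (Fin n))).filter
      (fun S => (S ∩ F).card = j), 2 ^ (S ∩ F).card
      = ∑ S ∈ (Finset.powersetCard 3 (Finset.univ : Finset (Fin n))).filter
      (fun S => (S ∩ F).card = j), 2 ^ j := by
    apply Finset.sum_congr rfl
    intro S hS
    rw [(Finset.mem_filter.mp hS).2]
  rw [this, Finset.sum_const, fiber_count F hF j (by omega), smul_eq_mul]

open Finset in
lemma subcube_count (n k : ℕ) :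
    (Finset.univ.filter fun g : Fin n → Option Bool => freeCount g = k).card
      = n.choose k * 2 ^ (n - k) := by
  classical
  have hmap : ∀ g ∈ (Finset.univ.filter fun g : Fin n → Option Bool => freeCount g = k),
      (Finset.univ.filter fun i => g i = none) ∈ Finset.powersetCard k (Finset.univ : Finset (Fin n)) := by
    intro g hg
    simp only [mem_filter, mem_univ, true_and] at hg
    simp [Finset.mem_powersetCard, hg, freeCount] at *
    exact hg
  rw [Finset.card_eq_sum_card_fiberwise hmap]
  have hfib : ∀ J ∈ Finset.powersetCard k (Finset.univ : Finset (Fin n)),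
      ((Finset.univ.filter fun g : Fin n → Option Bool => freeCount g = k).filter
        (fun g => (Finset.univ.filter fun i => g i = none) = J)).card = 2 ^ (n - k) := by
    intro J hJ
    rw [Finset.mem_powersetCard] at hJ
    have hJc : J.card = k := hJ.2
    have : ((Finset.univ.filter fun g : Fin n → Option Bool => freeCount g = k).filter
        (fun g => (Finset.univ.filter fun i => g i = none) = J))
        = Fintype.piFinset (fun i => if i ∈ J then ({none} : Finset (Option Bool))
            else {some true, some false}) := by
      ext g
      simp only [Fintype.mem_piFinset, mem_filter, mem_univ, true_and]
      constructor
      · rintro ⟨-, hfJ⟩ i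
        by_cases hi : i ∈ J
        · simp only [hi, if_true, Finset.mem_singleton]
          rw [← hfJ] at hi; simpa using hi
        · simp only [hi, if_false]
          have : ¬ g i = none := by
            intro h; apply hi; rw [← hfJ]; simpa using h
          cases h : g i with
          | none => exact absurd h this
          | some b => cases b <;> simp
      · intro h
        have heq : (Finset.univ.filter fun i => g i = none) = J := by
          ext i
          simp only [mem_filter, mem_univ, true_and]
          constructor
          · intro hgi
            by_contra hi
            have := h i
            simp [hi] at this
            rcases this with h' | h' <;> rw [hgi] at h' <;> simp at h'
          · intro hi
            have := h i
            simpa [hi] using this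
        refine ⟨?_, heq⟩
        simpa [freeCount, heq] using hJc
    rw [this, Fintype.card_piFinset]
    have : ∀ i : Fin n, ((if i ∈ J then ({none} : Finset (Option Bool))
        else {some true, some false}).card) = if i ∈ J then 1 else 2 := by
      intro i; by_cases hi : i ∈ J <;> simp [hi]
    simp_rw [this]
    rw [Finset.prod_ite (fun _ => (1:ℕ)) (fun _ => (2:ℕ))]
    simp only [Finset.prod_const, one_pow, one_mul]
    have : (Finset.univ.filter fun i : Fin n => ¬ i ∈ J) = Jᶜ := by ext i; simp
    rw [this, Finset.card_compl, Fintype.card_fin, hJc]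
  rw [Finset.sum_congr rfl hfib, Finset.sum_const, Finset.card_powersetCard,
    Finset.card_univ, Fintype.card_fin, smul_eq_mul]

open Finset in
lemma card_clause3 (n : ℕ) : Fintype.card (Clause3 n) = n.choose 3 * 8 := by
  classical
  rw [Fintype.card_sigma]
  have hfib : ∀ s : {s : Finset (Fin n) // s.card = 3},
      Fintype.card ({i // i ∈ s.val} → Bool) = 8 := by
    intro s
    rw [Fintype.card_fun, Fintype.card_coe, s.2, Fintype.card_bool]
    norm_num
  simp_rw [hfib]
  rw [Finset.sum_const, Finset.card_univ, Fintype.card_subtype, smul_eq_mul]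
  congr 1
  have : (Finset.univ.filter (fun s : Finset (Fin n) => s.card = 3))
      = Finset.powersetCard 3 (Finset.univ : Finset (Fin n)) := by
    ext S; simp [Finset.mem_powersetCard]
  rw [this, Finset.card_powersetCard, Finset.card_univ, Fintype.card_fin]

/-- Expected number of surviving `k`-subcubes: if `m` 3-clauses on `n` variables are
drawn independently and uniformly at random and `X_k` counts the axis-aligned
`k`-subcubes all of whose vertices satisfy all `m` clauses, then
`E[X_k] = C(n,k) · 2^(n−k) · (1 − q_{k,n})^m`.  (The expectation is expressed as the
average of `X_k` over all tuples of `m` clauses.) -/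
theorem expected_surviving_subcubes (n k m : ℕ) (hn : 3 ≤ n) (hk : k ≤ n) :
    (∑ cs : Fin m → Clause3 n,
        ((Finset.univ.filter fun g : Fin n → Option Bool =>
          freeCount g = k ∧ ∀ x, isVertex g x → ∀ j, ¬ falsifies x (cs j)).card : ℝ)) /
      (Fintype.card (Fin m → Clause3 n) : ℝ) =
      (Nat.choose n k : ℝ) * 2 ^ (n - k) * (1 - qkn n k) ^ m := by
  classical
  have hN : Fintype.card (Clause3 n) = n.choose 3 * 8 := card_clause3 n
  have hch : 0 < n.choose 3 := Nat.choose_pos hn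
  have hN0 : (0:ℝ) < (Fintype.card (Clause3 n) : ℝ) := by
    rw [hN]; push_cast; positivity
  -- the key per-subcube computation
  have hgood : ∀ g : Fin n → Option Bool, freeCount g = k →
      ((Finset.univ.filter fun c : Clause3 n => ∀ x, isVertex g x → ¬ falsifies x c).card : ℝ)
        = (Fintype.card (Clause3 n) : ℝ) * (1 - qkn n k) := by
    intro g hg
    have hbad := bad_count g hg
    have hsplit : (Finset.univ.filter fun c : Clause3 n =>
          ∀ x, isVertex g x → ¬ falsifies x c).card
        + (Finset.univ.filter fun c : Clause3 n => ∃ x, isVertex g x ∧ falsifies x c).card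
        = Fintype.card (Clause3 n) := by
      have : (Finset.univ.filter fun c : Clause3 n => ∀ x, isVertex g x → ¬ falsifies x c)
          = Finset.univ.filter (fun c : Clause3 n => ¬ ∃ x, isVertex g x ∧ falsifies x c) := by
        apply Finset.filter_congr
        intro c _
        push_neg
        simp
      rw [this, add_comm, Finset.card_filter_add_card_filter_not, Finset.card_univ]
    have hBq : ((∑ j ∈ Finset.range 4, (k.choose j * (n - k).choose (3 - j)) * 2 ^ j : ℕ) : ℝ)
        = (Fintype.card (Clause3 n) : ℝ) * qkn n k := by
      rw [qkn, hN]
      have hc : ((n.choose 3 : ℝ)) ≠ 0 := by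
        exact_mod_cast hch.ne'
      field_simp
      simp only [Finset.sum_range_succ, Finset.sum_range_zero]
      push_cast
      norm_num
      ring
    have hcast : ((Finset.univ.filter fun c : Clause3 n =>
          ∀ x, isVertex g x → ¬ falsifies x c).card : ℝ)
        = (Fintype.card (Clause3 n) : ℝ)
          - ((∑ j ∈ Finset.range 4, (k.choose j * (n - k).choose (3 - j)) * 2 ^ j : ℕ) : ℝ) := by
      rw [← hbad]
      have h := congrArg (Nat.cast : ℕ → ℝ) hsplit
      push_cast at h
      linarith
    rw [hcast, hBq]
    ring
  -- rewrite the numerator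
  have hnum : (∑ cs : Fin m → Clause3 n,
        ((Finset.univ.filter fun g : Fin n → Option Bool =>
          freeCount g = k ∧ ∀ x, isVertex g x → ∀ j, ¬ falsifies x (cs j)).card : ℝ))
      = ((n.choose k : ℝ) * 2 ^ (n - k))
          * ((Fintype.card (Clause3 n) : ℝ) * (1 - qkn n k)) ^ m := by
    have step1 : ∀ cs : Fin m → Clause3 n,
        ((Finset.univ.filter fun g : Fin n → Option Bool =>
          freeCount g = k ∧ ∀ x, isVertex g x → ∀ j, ¬ falsifies x (cs j)).card : ℝ)
        = ∑ g : Fin n → Option Bool,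
            (if freeCount g = k then
              (if (∀ j, ∀ x, isVertex g x → ¬ falsifies x (cs j)) then (1:ℝ) else 0) else 0) := by
      intro cs
      rw [Finset.card_filter]
      push_cast
      apply Finset.sum_congr rfl
      intro g _
      have hiff : (freeCount g = k ∧ ∀ x, isVertex g x → ∀ j, ¬ falsifies x (cs j))
          ↔ (freeCount g = k ∧ ∀ j, ∀ x, isVertex g x → ¬ falsifies x (cs j)) := by
        constructor
        · rintro ⟨h1, h2⟩; exact ⟨h1, fun j x hx => h2 x hx j⟩
        · rintro ⟨h1, h2⟩; exact ⟨h1, fun x hx j => h2 j x hx⟩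
      rw [if_congr hiff rfl rfl, ite_and]
    simp_rw [step1]
    rw [Finset.sum_comm]
    have step2 : ∀ g : Fin n → Option Bool,
        (∑ cs : Fin m → Clause3 n, (if freeCount g = k then
            (if (∀ j, ∀ x, isVertex g x → ¬ falsifies x (cs j)) then (1:ℝ) else 0) else 0))
        = if freeCount g = k then
            ((Fintype.card (Clause3 n) : ℝ) * (1 - qkn n k)) ^ m else 0 := by
      intro g
      by_cases hg : freeCount g = k
      · simp only [hg, if_true]
        have hprod : ∀ cs : Fin m → Clause3 n,
            (if (∀ j, ∀ x, isVertex g x → ¬ falsifies x (cs j)) then (1:ℝ) else 0)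
            = ∏ j : Fin m, (if (∀ x, isVertex g x → ¬ falsifies x (cs j)) then (1:ℝ) else 0) := by
          intro cs
          rw [Finset.prod_boole]
          simp
        simp_rw [hprod]
        rw [← Fintype.sum_pow (fun c : Clause3 n =>
          (if (∀ x, isVertex g x → ¬ falsifies x c) then (1:ℝ) else 0)) m]
        congr 1
        rw [← hgood g hg, Finset.card_filter]
        push_cast
        rfl
      · simp [hg]
    simp_rw [step2]
    rw [← Finset.sum_filter]
    rw [Finset.sum_const, subcube_count n k, nsmul_eq_mul]
    push_cast
    ring
  rw [hnum]
  have hden : (Fintype.card (Fin m → Clause3 n) : ℝ) = (Fintype.card (Clause3 n) : ℝ) ^ m := by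
    rw [Fintype.card_fun, Fintype.card_fin]
    push_cast
    ring
  rw [hden, mul_pow, mul_div_assoc,
    mul_comm ((Fintype.card (Clause3 n) : ℝ) ^ m) ((1 - qkn n k) ^ m), mul_div_assoc,
    div_self (pow_ne_zero m hN0.ne'), mul_one]
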